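/- arXiv:2602.09958 — 6 statements merged into one kernel-verified Lean document; each statement's English description precedes it below -/
import Mathlib

section
/- Let I ⊆ ℝ be an open interval, let k ≥ 1, and let f, g : I → ℝ be C^k functions such that f and g have only simple zeros in I and their zero sets coincide. Then there exists a nowhere-vanishing C^{k-1} function φ : I → ℝ such that f(x) = g(x)·φ(x) for all x ∈ I, and φ(a) = f'(a)/g'(a) at every common zero a. -/
/-!
Near a common zero `a`, Hadamard's lemma writes `f x = (x - a) · F x` and `g x = (x - a) · G x`
with `F = dslope f a`, `G = dslope g a` of class `C^{k-1}`, because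
`F x = ∫₀¹ f'(a + t (x - a)) dt` and differentiating under the integral sign costs one derivative
of `f` per derivative of `F`. Since the zero is simple, `G a = g'(a) ≠ 0`, so near `a` the
quotient `f / g = F / G` extends to a `C^{k-1}` function with value `f'(a) / g'(a)` at `a`; away
from the zeros `f / g` is even `C^k`.
-/

open Set Filter Topology MeasureTheory intervalIntegral

variable {E : Type*} [NormedAddCommGroup E] [NormedSpace ℝ E]

noncomputable def segmentMoment (a : ℝ) (n : ℕ) (u : ℝ → E) (x : ℝ) : E :=
  ∫ t in (0 : ℝ)..1, t ^ n • u (a + t * (x - a))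

lemma norm_pow_smul_le {t : ℝ} (ht : t ∈ Icc (0 : ℝ) 1) (n : ℕ) (v : E) : ‖t ^ n • v‖ ≤ ‖v‖ := by
  rw [norm_smul, norm_pow, Real.norm_of_nonneg ht.1]
  exact mul_le_of_le_one_left (norm_nonneg v) (pow_le_one₀ ht.1 ht.2)

lemma uIoc_zero_one_subset_Icc : uIoc (0 : ℝ) 1 ⊆ Icc 0 1 := by
  rw [uIoc_of_le zero_le_one]
  exact Ioc_subset_Icc_self

section SegmentMoment

variable {s : Set ℝ} {a : ℝ}

lemma Convex.exists_isCompact_segments_subset (hs : Convex ℝ s) (ho : IsOpen s) (ha : a ∈ s)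
    {x₀ : ℝ} (hx₀ : x₀ ∈ s) :
    ∃ K ⊆ s, IsCompact K ∧ ∀ᶠ x in 𝓝 x₀, ∀ t ∈ Icc (0 : ℝ) 1, a + t * (x - a) ∈ K := by
  obtain ⟨δ, hδ, hball⟩ := Metric.nhds_basis_closedBall.mem_iff.mp (ho.mem_nhds hx₀)
  refine ⟨(fun p : ℝ × ℝ => a + p.1 * (p.2 - a)) '' (Icc 0 1 ×ˢ Metric.closedBall x₀ δ),
    ?_, ?_, ?_⟩
  · rintro _ ⟨⟨t, x⟩, ⟨ht, hx⟩, rfl⟩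
    exact hs.add_smul_sub_mem ha (hball hx) ht
  · exact (isCompact_Icc.prod (isCompact_closedBall x₀ δ)).image (by fun_prop)
  · filter_upwards [Metric.closedBall_mem_nhds x₀ hδ] with x hx t ht
    exact ⟨(t, x), ⟨ht, hx⟩, rfl⟩

lemma continuousOn_segmentMoment_integrand (hs : Convex ℝ s) (ha : a ∈ s) {u : ℝ → E}
    (hu : ContinuousOn u s) (n : ℕ) {x : ℝ} (hx : x ∈ s) :
    ContinuousOn (fun t : ℝ => t ^ n • u (a + t * (x - a))) (Icc 0 1) :=
  (continuousOn_pow n).smul (hu.comp (by fun_prop) fun _ ht => hs.add_smul_sub_mem ha hx ht)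

lemma continuousOn_segmentMoment (hs : Convex ℝ s) (ho : IsOpen s) (ha : a ∈ s) (n : ℕ)
    {u : ℝ → E} (hu : ContinuousOn u s) : ContinuousOn (segmentMoment a n u) s := by
  intro x₀ hx₀
  obtain ⟨K, hKs, hK, hpath⟩ := hs.exists_isCompact_segments_subset ho ha hx₀
  obtain ⟨C, hC⟩ := hK.exists_bound_of_continuousOn (hu.mono hKs)
  refine (continuousAt_of_dominated_interval (bound := fun _ => C) ?_ ?_
    intervalIntegrable_const ?_).continuousWithinAt
  · filter_upwards [ho.mem_nhds hx₀] with x hx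
    exact ((continuousOn_segmentMoment_integrand hs ha hu n hx).mono
      uIoc_zero_one_subset_Icc).aestronglyMeasurable measurableSet_uIoc
  · filter_upwards [hpath] with x hx
    refine Eventually.of_forall fun t ht => ?_
    have ht := uIoc_zero_one_subset_Icc ht
    exact (norm_pow_smul_le ht n _).trans (hC _ (hx t ht))
  · refine Eventually.of_forall fun t ht => ?_
    have hp : a + t * (x₀ - a) ∈ s := hs.add_smul_sub_mem ha hx₀ (uIoc_zero_one_subset_Icc ht)
    exact continuousAt_const.smul
      ((hu.continuousAt (ho.mem_nhds hp)).comp (f := fun x => a + t * (x - a)) (by fun_prop))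

lemma hasDerivAt_segmentMoment (hs : Convex ℝ s) (ho : IsOpen s) (ha : a ∈ s) (n : ℕ)
    {u : ℝ → E} (hu : DifferentiableOn ℝ u s) (hu' : ContinuousOn (deriv u) s)
    {x₀ : ℝ} (hx₀ : x₀ ∈ s) :
    HasDerivAt (segmentMoment a n u) (segmentMoment a (n + 1) (deriv u) x₀) x₀ := by
  obtain ⟨K, hKs, hK, hpath⟩ := hs.exists_isCompact_segments_subset ho ha hx₀
  obtain ⟨C, hC⟩ := hK.exists_bound_of_continuousOn (hu'.mono hKs)
  refine (hasDerivAt_integral_of_dominated_loc_of_deriv_le (bound := fun _ => C)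
    (F' := fun x t => t ^ (n + 1) • deriv u (a + t * (x - a)))
    (inter_mem (ho.mem_nhds hx₀) hpath) ?_ ?_ ?_ ?_ intervalIntegrable_const ?_).2
  · filter_upwards [ho.mem_nhds hx₀] with x hx
    exact ((continuousOn_segmentMoment_integrand hs ha hu.continuousOn n hx).mono
      uIoc_zero_one_subset_Icc).aestronglyMeasurable measurableSet_uIoc
  · exact (continuousOn_segmentMoment_integrand hs ha hu.continuousOn n
      hx₀).intervalIntegrable_of_Icc zero_le_one
  · exact ((continuousOn_segmentMoment_integrand hs ha hu' (n + 1) hx₀).mono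
      uIoc_zero_one_subset_Icc).aestronglyMeasurable measurableSet_uIoc
  · refine Eventually.of_forall fun t ht x hx => ?_
    have ht := uIoc_zero_one_subset_Icc ht
    exact (norm_pow_smul_le ht (n + 1) _).trans (hC _ (hx.2 t ht))
  · refine Eventually.of_forall fun t ht x hx => ?_
    have hp : a + t * (x - a) ∈ s := hs.add_smul_sub_mem ha hx.1 (uIoc_zero_one_subset_Icc ht)
    have hline : HasDerivAt (fun x : ℝ => a + t * (x - a)) t x := by
      simpa using (((hasDerivAt_id x).sub_const a).const_mul t).const_add a
    have := ((hu.differentiableAt (ho.mem_nhds hp)).hasDerivAt.scomp x hline).const_smul (t ^ n)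
    rwa [smul_smul, ← pow_succ] at this

lemma contDiffOn_segmentMoment (hs : Convex ℝ s) (ho : IsOpen s) (ha : a ∈ s) (m : ℕ) :
    ∀ (n : ℕ) {u : ℝ → E}, ContDiffOn ℝ m u s → ContDiffOn ℝ m (segmentMoment a n u) s := by
  induction m with
  | zero =>
    intro n u hu
    exact contDiffOn_zero.2 (continuousOn_segmentMoment hs ho ha n hu.continuousOn)
  | succ m ih =>
    intro n u hu
    have hu' : ContDiffOn ℝ m (deriv u) s := hu.deriv_of_isOpen ho (by norm_cast)
    have hderiv x (hx : x ∈ s) := hasDerivAt_segmentMoment hs ho ha n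
      (hu.differentiableOn (by simp)) hu'.continuousOn hx
    rw [Nat.cast_succ, contDiffOn_succ_iff_deriv_of_isOpen ho]
    exact ⟨fun x hx => (hderiv x hx).differentiableAt.differentiableWithinAt, by simp,
      (ih (n + 1) hu').congr fun x hx => (hderiv x hx).deriv⟩

lemma dslope_eq_segmentMoment [CompleteSpace E] (hs : Convex ℝ s) (ho : IsOpen s) (ha : a ∈ s)
    {f : ℝ → E} (hf : DifferentiableOn ℝ f s) (hf' : ContinuousOn (deriv f) s)
    {x : ℝ} (hx : x ∈ s) :
    dslope f a x = segmentMoment a 0 (deriv f) x := by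
  rcases eq_or_ne x a with rfl | hxa
  · simp [segmentMoment, intervalIntegral.integral_const]
  have hsub : uIcc a x ⊆ s := hs.ordConnected.uIcc_subset ha hx
  have hxa' : x - a ≠ 0 := sub_ne_zero.mpr hxa
  have hFTC : ∫ y in a..x, deriv f y = f x - f a :=
    integral_deriv_eq_sub (fun y hy => hf.differentiableAt (ho.mem_nhds (hsub hy)))
      ((hf'.mono hsub).intervalIntegrable)
  have hcomp := integral_comp_mul_add (deriv f) hxa' a (a := 0) (b := 1)
  rw [mul_zero, zero_add, mul_one, sub_add_cancel, hFTC] at hcomp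
  rw [dslope_of_ne f hxa, slope_def_module, ← hcomp, segmentMoment]
  simp only [pow_zero, one_smul]
  congr 1 with t
  ring_nf

end SegmentMoment

theorem ContDiffAt.dslope_same [CompleteSpace E] {f : ℝ → E} {a : ℝ} {n : ℕ}
    (hf : ContDiffAt ℝ (n + 1) f a) : ContDiffAt ℝ n (dslope f a) a := by
  obtain ⟨U, hU, hfU⟩ := hf.contDiffOn le_rfl (by simp)
  obtain ⟨ε, hε, hball⟩ := Metric.mem_nhds_iff.mp hU
  have hfb := hfU.mono hball
  have hf' : ContDiffOn ℝ n (deriv f) (Metric.ball a ε) :=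
    hfb.deriv_of_isOpen Metric.isOpen_ball le_rfl
  have hdslope : ContDiffOn ℝ n (dslope f a) (Metric.ball a ε) :=
    (contDiffOn_segmentMoment (convex_ball a ε) Metric.isOpen_ball (Metric.mem_ball_self hε) n 0
      hf').congr fun x hx => dslope_eq_segmentMoment (convex_ball a ε) Metric.isOpen_ball
        (Metric.mem_ball_self hε) (hfb.differentiableOn (by simp)) hf'.continuousOn hx
  exact hdslope.contDiffAt (Metric.ball_mem_nhds a hε)

lemma div_eq_dslope_div_dslope {𝕜 : Type*} [NontriviallyNormedField 𝕜] {f g : 𝕜 → 𝕜} {a y : 𝕜}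
    (hfa : f a = 0) (hga : g a = 0) (hy : y ≠ a) :
    f y / g y = dslope f a y / dslope g a y := by
  rw [dslope_of_ne _ hy, dslope_of_ne _ hy, slope_def_field, slope_def_field, hfa, hga, sub_zero,
    sub_zero, div_div_div_cancel_right₀ (sub_ne_zero.2 hy)]

noncomputable def extendedQuotient (f g : ℝ → ℝ) (x : ℝ) : ℝ :=
  if g x = 0 then deriv f x / deriv g x else f x / g x

section ExtendedQuotient

variable {f g : ℝ → ℝ} {x : ℝ}

lemma extendedQuotient_of_eq_zero (hgx : g x = 0) :
    extendedQuotient f g x = deriv f x / deriv g x := if_pos hgx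

lemma extendedQuotient_of_ne_zero (hgx : g x ≠ 0) : extendedQuotient f g x = f x / g x :=
  if_neg hgx

lemma extendedQuotient_eventuallyEq_div (hg : ContinuousAt g x) (hgx : g x ≠ 0) :
    extendedQuotient f g =ᶠ[𝓝 x] f / g := by
  filter_upwards [hg.eventually_ne hgx] with y hy
  exact extendedQuotient_of_ne_zero hy

lemma extendedQuotient_eventuallyEq_dslope_div_dslope (hfx : f x = 0) (hgx : g x = 0)
    (hg : HasDerivAt g (deriv g x) x) (hg' : deriv g x ≠ 0) :
    extendedQuotient f g =ᶠ[𝓝 x] dslope f x / dslope g x := by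
  filter_upwards [eventually_nhdsWithin_iff.mp (hg.eventually_ne hg' (c := 0))] with y hy
  rcases eq_or_ne y x with rfl | hyx
  · simp [extendedQuotient_of_eq_zero hgx]
  · rw [extendedQuotient_of_ne_zero (hy hyx), Pi.div_apply,
      div_eq_dslope_div_dslope hfx hgx hyx]

lemma contDiffAt_extendedQuotient {n : ℕ} (hf : ContDiffAt ℝ (n + 1) f x)
    (hg : ContDiffAt ℝ (n + 1) g x) (hg' : g x = 0 → deriv g x ≠ 0) (hfg : g x = 0 → f x = 0) :
    ContDiffAt ℝ n (extendedQuotient f g) x := by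
  by_cases hgx : g x = 0
  · have hG : dslope g x x ≠ 0 := by rw [dslope_same]; exact hg' hgx
    exact (hf.dslope_same.div hg.dslope_same hG).congr_of_eventuallyEq
      (extendedQuotient_eventuallyEq_dslope_div_dslope (hfg hgx) hgx
        (hg.differentiableAt (by simp)).hasDerivAt (hg' hgx))
  · exact ((hf.div hg hgx).of_le le_self_add).congr_of_eventuallyEq
      (extendedQuotient_eventuallyEq_div hg.continuousAt hgx)

lemma extendedQuotient_ne_zero (hf' : f x = 0 → deriv f x ≠ 0) (hg' : g x = 0 → deriv g x ≠ 0)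
    (hfg : f x = 0 ↔ g x = 0) : extendedQuotient f g x ≠ 0 := by
  by_cases hgx : g x = 0
  · rw [extendedQuotient_of_eq_zero hgx]
    exact div_ne_zero (hf' (hfg.mpr hgx)) (hg' hgx)
  · rw [extendedQuotient_of_ne_zero hgx]
    exact div_ne_zero (mt hfg.mp hgx) hgx

lemma eq_mul_extendedQuotient (hfg : g x = 0 → f x = 0) : f x = g x * extendedQuotient f g x := by
  by_cases hgx : g x = 0
  · rw [hgx, zero_mul, hfg hgx]
  · rw [extendedQuotient_of_ne_zero hgx, mul_div_cancel₀ _ hgx]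

end ExtendedQuotient

theorem stmt_1_general (I : Set ℝ) (hIopen : IsOpen I)
    (k : ℕ) (hk : 1 ≤ k) (f g : ℝ → ℝ)
    (hf : ContDiffOn ℝ k f I) (hg : ContDiffOn ℝ k g I)
    (hfsimple : ∀ a ∈ I, f a = 0 → deriv f a ≠ 0)
    (hgsimple : ∀ a ∈ I, g a = 0 → deriv g a ≠ 0)
    (hzero : ∀ a ∈ I, (f a = 0 ↔ g a = 0)) :
    ∃ φ : ℝ → ℝ, ContDiffOn ℝ (k - 1 : ℕ) φ I ∧ (∀ x ∈ I, φ x ≠ 0) ∧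
      (∀ x ∈ I, f x = g x * φ x) ∧
      (∀ a ∈ I, f a = 0 → φ a = deriv f a / deriv g a) := by
  obtain ⟨m, rfl⟩ : ∃ m, k = m + 1 := ⟨k - 1, by omega⟩
  rw [Nat.add_sub_cancel]
  push_cast at hf hg
  refine ⟨extendedQuotient f g, fun x hx => ContDiffAt.contDiffWithinAt ?_,
    fun x hx => extendedQuotient_ne_zero (hfsimple x hx) (hgsimple x hx) (hzero x hx),
    fun x hx => eq_mul_extendedQuotient (hzero x hx).mpr,
    fun a ha hfa => extendedQuotient_of_eq_zero ((hzero a ha).mp hfa)⟩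
  exact contDiffAt_extendedQuotient (hf.contDiffAt (hIopen.mem_nhds hx))
    (hg.contDiffAt (hIopen.mem_nhds hx)) (hgsimple x hx) (hzero x hx).mpr

/-- C^k quotient of real functions on an open interval. -/
theorem stmt_1 (I : Set ℝ) (hIopen : IsOpen I) (hIinterval : I.OrdConnected)
    (k : ℕ) (hk : 1 ≤ k) (f g : ℝ → ℝ)
    (hf : ContDiffOn ℝ k f I) (hg : ContDiffOn ℝ k g I)
    (hfsimple : ∀ a ∈ I, f a = 0 → deriv f a ≠ 0)
    (hgsimple : ∀ a ∈ I, g a = 0 → deriv g a ≠ 0)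
    (hzero : ∀ a ∈ I, (f a = 0 ↔ g a = 0)) :
    ∃ φ : ℝ → ℝ, ContDiffOn ℝ (k - 1 : ℕ) φ I ∧ (∀ x ∈ I, φ x ≠ 0) ∧
      (∀ x ∈ I, f x = g x * φ x) ∧
      (∀ a ∈ I, f a = 0 → φ a = deriv f a / deriv g a) :=
  stmt_1_general I hIopen k hk f g hf hg hfsimple hgsimple hzero
end

section
/- Let Ω ⊆ ℝⁿ be an open set with n ≥ 2, let k ≥ 1, and let f, g : Ω → ℝ be C^k functions with simple zeros whose zero sets Σ_f and Σ_g coincide. Then there exists a nowhere-vanishing C^{k-1} function φ : Ω → ℝ such that f(x) = g(x)·φ(x) for all x ∈ Ω. -/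
/-!
Near a zero `a` of `g`, put `L = Dg(a)` and pick `v` with `L v = 1`. The map
`Ψ x = x + (g x - L x) • v` has `DΨ(a) = id` and `L ∘ Ψ = g`, so in the coordinates `y = Ψ x`
the function `g` becomes the linear form `L` and `F = f ∘ Ψ⁻¹` vanishes on `ker L`. Hadamard's
lemma `F y = L y * ∫₀¹ DF(y + (t - 1) L(y) v) v dt` (made global by a bump function) then gives
`f = g * h` near `a` with `h` of class `C^(k-1)`; away from the zeros, `h = f / g`. The local
factors `h` are glued into the limit of `f / g` along `{g ≠ 0}`, which is dense because simple
zeros of `g` have no interior. If `h a = 0` at a zero `a`, then `Df(a) = h a • Dg(a) = 0`.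
-/

open Set Filter Topology

universe u

theorem Continuous.exists_eventually_forall_norm_le {X Y F : Type*} [TopologicalSpace X]
    [TopologicalSpace Y] [SeminormedAddCommGroup F] {G : X × Y → F} (hG : Continuous G)
    {K : Set Y} (hK : IsCompact K) (x₀ : X) :
    ∃ C, ∀ᶠ x in 𝓝 x₀, ∀ y ∈ K, ‖G (x, y)‖ ≤ C := by
  obtain ⟨C, hC⟩ := hK.exists_bound_of_continuousOn
    (hG.comp (Continuous.prodMk_right x₀)).continuousOn
  refine ⟨C + 1, hK.eventually_forall_of_forall_eventually fun y hy => ?_⟩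
  have : ‖G (x₀, y)‖ < C + 1 := (hC y hy).trans_lt (lt_add_one C)
  exact (hG.norm.continuousAt.eventually (gt_mem_nhds this)).mono fun z hz => hz.le

-- `E` and `F` share a universe because the induction step replaces `F` by `E →L[ℝ] F`.
theorem contDiff_parametric_intervalIntegral_of_contDiff {E F : Type u} [NormedAddCommGroup E]
    [NormedSpace ℝ E] [NormedAddCommGroup F] [NormedSpace ℝ F] (m : ℕ) {G : E → ℝ → F}
    (hG : ContDiff ℝ m (Function.uncurry G)) (a b : ℝ) :
    ContDiff ℝ m fun x => ∫ t in a..b, G x t := by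
  induction m generalizing F with
  | zero =>
    exact contDiff_zero.2 <| intervalIntegral.continuous_parametric_intervalIntegral_of_continuous'
      (contDiff_zero.1 hG) a b
  | succ m ih =>
    let G' : E → ℝ → E →L[ℝ] F := fun x t =>
      fderiv ℝ (Function.uncurry G) (x, t) ∘L ContinuousLinearMap.inl ℝ E ℝ
    have hG' : ContDiff ℝ m (Function.uncurry G') :=
      (hG.fderiv_right (by push_cast; rfl)).clm_comp contDiff_const
    have hGd : Differentiable ℝ (Function.uncurry G) := hG.differentiable (by simp)
    have hderiv : ∀ x₀, HasFDerivAt (fun x => ∫ t in a..b, G x t) (∫ t in a..b, G' x₀ t) x₀ := by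
      intro x₀
      obtain ⟨C, hC⟩ := hG'.continuous.exists_eventually_forall_norm_le isCompact_uIcc x₀
      have hGc : ∀ x, Continuous (G x) := fun x => hG.continuous.comp (Continuous.prodMk_right x)
      have hG'c : ∀ x, Continuous (G' x) :=
        fun x => hG'.continuous.comp (Continuous.prodMk_right x)
      refine intervalIntegral.hasFDerivAt_integral_of_dominated_of_fderiv_le (bound := fun _ => C)
        hC (.of_forall fun x => (hGc x).aestronglyMeasurable) ((hGc x₀).intervalIntegrable _ _)
        (hG'c x₀).aestronglyMeasurable
        (.of_forall fun t ht x hx => hx t (uIoc_subset_uIcc ht)) intervalIntegrable_const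
        (.of_forall fun t _ x _ =>
          (hGd (x, t)).hasFDerivAt.comp (f := fun e => (e, t)) x (hasFDerivAt_prodMk_left x t))
    rw [Nat.cast_succ, contDiff_succ_iff_fderiv]
    refine ⟨fun x => (hderiv x).differentiableAt, by simp, ?_⟩
    rw [funext fun x => (hderiv x).fderiv]
    exact ih hG'

section Hadamard

variable {E F : Type u} [NormedAddCommGroup E] [NormedSpace ℝ E] [NormedAddCommGroup F]
  [NormedSpace ℝ F]

theorem ContDiffOn.contDiff_smul_of_tsupport_subset {n : WithTop ℕ∞} {χ : E → ℝ} {Φ : E → F}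
    {U : Set E} (hχ : ContDiff ℝ n χ) (hΦ : ContDiffOn ℝ n Φ U) (hU : IsOpen U)
    (hsupp : tsupport χ ⊆ U) : ContDiff ℝ n fun y => χ y • Φ y := by
  refine contDiff_iff_contDiffAt.2 fun y => ?_
  by_cases hy : y ∈ tsupport χ
  · exact hχ.contDiffAt.smul (hΦ.contDiffAt (hU.mem_nhds (hsupp hy)))
  · exact (contDiffAt_const (c := (0 : F))).congr_of_eventuallyEq <|
      (notMem_tsupport_iff_eventuallyEq.1 hy).mono fun z hz => by simp [hz]

variable [CompleteSpace F]

theorem exists_contDiff_eq_add_smul {m : ℕ} {Φ : E → F} (hΦ : ContDiff ℝ (m + 1) Φ)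
    (L : E →L[ℝ] ℝ) (v : E) :
    ∃ H : E → F, ContDiff ℝ m H ∧ ∀ y, Φ y = Φ (y - L y • v) + L y • H y := by
  -- `c y` runs from `y - L y • v` at `t = 0` to `y` at `t = 1`.
  let c : E → ℝ → E := fun y t => y + ((t - 1) * L y) • v
  have hc : ContDiff ℝ m (Function.uncurry c) := by fun_prop
  have hΦd : Differentiable ℝ Φ := hΦ.differentiable (by simp)
  refine ⟨fun y => ∫ t in (0 : ℝ)..1, fderiv ℝ Φ (c y t) v,
    contDiff_parametric_intervalIntegral_of_contDiff m
      (((hΦ.fderiv_right le_rfl).comp hc).clm_apply contDiff_const) 0 1, fun y => ?_⟩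
  have hcy : ∀ t, HasDerivAt (c y) (L y • v) t := fun t => by
    have h := ((((hasDerivAt_id t).sub_const 1).mul_const (L y)).smul_const v).const_add y
    rwa [one_mul] at h
  have hder : ∀ t, HasDerivAt (fun t => Φ (c y t)) (L y • fderiv ℝ Φ (c y t) v) t := fun t => by
    have h := (hΦd (c y t)).hasFDerivAt.comp_hasDerivAt t (hcy t)
    rwa [ContinuousLinearMap.map_smul] at h
  have hcont : Continuous fun t => L y • fderiv ℝ Φ (c y t) v :=
    ((hΦ.continuous_fderiv (by simp)).comp (by fun_prop : Continuous (c y))).clm_apply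
      continuous_const |>.const_smul _
  have hFTC := intervalIntegral.integral_eq_sub_of_hasDerivAt (fun t _ => hder t)
    (hcont.intervalIntegrable 0 1)
  rw [intervalIntegral.integral_smul] at hFTC
  simp only [c] at hFTC ⊢
  rw [hFTC]
  simp [sub_eq_add_neg]

theorem exists_contDiffAt_eventually_eq_smul [HasContDiffBump E] {m : ℕ} {Φ : E → F} {b : E}
    (hΦ : ContDiffAt ℝ (m + 1) Φ b) {L : E →L[ℝ] ℝ} {v : E} (hv : L v = 1)
    (hΦ0 : ∀ᶠ y in 𝓝 b, L y = 0 → Φ y = 0) :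
    ∃ H : E → F, ContDiffAt ℝ m H b ∧ ∀ᶠ y in 𝓝 b, Φ y = L y • H y := by
  obtain ⟨U, hU, hΦU⟩ := hΦ.contDiffOn le_rfl (by simp)
  obtain ⟨R, hR, hRU⟩ := Metric.mem_nhds_iff.1 (inter_mem hU hΦ0)
  -- `χ • Φ` agrees with `Φ` near `b` and vanishes on all of `ker L`.
  let χ : ContDiffBump b := ⟨R / 4, R / 2, by positivity, by linarith⟩
  have hχΦ : ContDiff ℝ (m + 1) fun y => χ y • Φ y := by
    refine (hΦU.mono fun y hy => (hRU hy).1).contDiff_smul_of_tsupport_subset χ.contDiff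
      Metric.isOpen_ball ?_
    rw [χ.tsupport_eq]
    exact Metric.closedBall_subset_ball (half_lt_self hR)
  obtain ⟨H, hH, hχΦH⟩ := exists_contDiff_eq_add_smul hχΦ L v
  refine ⟨H, hH.contDiffAt, ?_⟩
  filter_upwards [Metric.ball_mem_nhds b (by positivity : 0 < R / 4)] with y hy
  have hχy : χ y = 1 := χ.one_of_mem_closedBall (Metric.ball_subset_closedBall hy)
  have hproj : χ (y - L y • v) • Φ (y - L y • v) = 0 := by
    by_cases hmem : y - L y • v ∈ Metric.ball b R
    · rw [(hRU hmem).2 (by simp [hv]), smul_zero]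
    · have hχ0 : χ (y - L y • v) = 0 :=
        χ.zero_of_le_dist ((half_le_self hR.le).trans (not_lt.1 hmem))
      rw [hχ0, zero_smul]
  simpa [hχy, hproj] using hχΦH y

end Hadamard

theorem exists_contDiffAt_eventually_eq_mul {E : Type} [NormedAddCommGroup E] [NormedSpace ℝ E]
    [FiniteDimensional ℝ E] {m : ℕ} {f g : E → ℝ} {a : E}
    (hf : ContDiffAt ℝ (m + 1) f a) (hg : ContDiffAt ℝ (m + 1) g a) (hdg : fderiv ℝ g a ≠ 0)
    (hfg : ∀ᶠ x in 𝓝 a, g x = 0 → f x = 0) :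
    ∃ h : E → ℝ, ContDiffAt ℝ m h a ∧ ∀ᶠ x in 𝓝 a, f x = g x * h x := by
  set L := fderiv ℝ g a
  obtain ⟨w, hw⟩ := DFunLike.ne_iff.mp hdg
  set v := (L w)⁻¹ • w
  have hv : L v = 1 := by simp_all [v]
  set Ψ : E → E := fun x => x + (g x - L x) • v
  have hLΨ : ∀ x, L (Ψ x) = g x := fun x => by simp [Ψ, hv]
  have hΨ : ContDiffAt ℝ (m + 1) Ψ a :=
    contDiffAt_id.add ((hg.sub L.contDiff.contDiffAt).smul contDiffAt_const)
  have hgL : HasFDerivAt g L a := (hg.differentiableAt (by simp)).hasFDerivAt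
  have hΨ' : HasFDerivAt Ψ (ContinuousLinearEquiv.refl ℝ E : E →L[ℝ] E) a := by
    have h := (hasFDerivAt_id a).add ((hgL.sub L.hasFDerivAt).smul_const v)
    simp only [sub_self, ContinuousLinearMap.zero_smulRight, add_zero] at h
    exact h
  have hn : (m + 1 : WithTop ℕ∞) ≠ 0 := by simp
  have hΨs := hΨ.hasStrictFDerivAt' hΨ' hn
  set Ψinv := hΨs.localInverse Ψ _ a
  have hinv : ContDiffAt ℝ (m + 1) Ψinv (Ψ a) := hΨ.to_localInverse hΨ' hn
  have hinva : Ψinv (Ψ a) = a := hΨ.localInverse_apply_image hΨ' hn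
  have hfΨ0 : ∀ᶠ y in 𝓝 (Ψ a), L y = 0 → f (Ψinv y) = 0 := by
    have : Tendsto Ψinv (𝓝 (Ψ a)) (𝓝 a) := by simpa [hinva] using hinv.continuousAt.tendsto
    filter_upwards [this.eventually hfg, hΨs.eventually_right_inverse] with y hy hy' hLy
    exact hy (by rw [← hLΨ, hy', hLy])
  obtain ⟨H, hH, hfH⟩ :=
    exists_contDiffAt_eventually_eq_smul ((hinva.symm ▸ hf).comp (Ψ a) hinv) hv hfΨ0
  refine ⟨H ∘ Ψ, hH.comp a (hΨ.of_le le_self_add), ?_⟩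
  filter_upwards [hΨs.eventually_left_inverse, hΨ.continuousAt.eventually hfH] with x hx hx'
  rw [← hLΨ x, ← smul_eq_mul, Function.comp_apply, ← hx']
  exact congrArg f hx.symm

theorem HasFDerivAt.mul_continuousAt_of_eq_zero {E : Type*} [NormedAddCommGroup E]
    [NormedSpace ℝ E] {g h : E → ℝ} {g' : E →L[ℝ] ℝ} {a : E} (hg : HasFDerivAt g g' a)
    (hga : g a = 0) (hh : ContinuousAt h a) :
    HasFDerivAt (fun x => g x * h x) (h a • g') a := by
  have hgO : g =O[𝓝 a] fun x => ‖x - a‖ := by simpa [hga] using hg.isBigO_sub.norm_right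
  have hho : (fun x => h x - h a) =o[𝓝 a] fun _ => (1 : ℝ) :=
    (Asymptotics.isLittleO_one_iff ℝ).2 (by simpa using hh.tendsto.sub_const (h a))
  have hsmall : (fun x => g x * (h x - h a)) =o[𝓝 a] fun x => x - a :=
    Asymptotics.IsLittleO.of_norm_right (by simpa using hgO.mul_isLittleO hho)
  rw [hasFDerivAt_iff_isLittleO] at hg ⊢
  refine (hsmall.add (hg.const_mul_left (h a))).congr_left fun x => ?_
  simp only [hga, smul_apply, smul_eq_mul]
  ring

theorem neBot_nhdsWithin_setOf_ne_zero {E : Type*} [NormedAddCommGroup E] [NormedSpace ℝ E]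
    {g : E → ℝ} {x : E} (hx : g x = 0 → fderiv ℝ g x ≠ 0) :
    (𝓝[{y | g y ≠ 0}] x).NeBot := by
  rw [← mem_closure_iff_nhdsWithin_neBot, mem_closure_iff_frequently]
  by_contra hcl
  have hg0 : g =ᶠ[𝓝 x] fun _ => 0 := (not_frequently.1 hcl).mono fun y hy => by simpa using hy
  exact hx hg0.self_of_nhds (by rw [hg0.fderiv_eq]; simp)

theorem exists_contDiffAt_ne_zero_eventually_eq_mul {E : Type} [NormedAddCommGroup E]
    [NormedSpace ℝ E] [FiniteDimensional ℝ E] {m : ℕ} {f g : E → ℝ} {a : E}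
    (hf : ContDiffAt ℝ (m + 1) f a) (hg : ContDiffAt ℝ (m + 1) g a)
    (hfs : f a = 0 → fderiv ℝ f a ≠ 0) (hgs : g a = 0 → fderiv ℝ g a ≠ 0)
    (hfg : ∀ᶠ x in 𝓝 a, f x = 0 ↔ g x = 0) :
    ∃ h : E → ℝ, ContDiffAt ℝ m h a ∧ h a ≠ 0 ∧ ∀ᶠ x in 𝓝 a, f x = g x * h x := by
  by_cases hga : g a = 0
  · obtain ⟨h, hh, hfgh⟩ :=
      exists_contDiffAt_eventually_eq_mul hf hg (hgs hga) (hfg.mono fun x hx => hx.2)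
    refine ⟨h, hh, fun hha => hfs (hfg.self_of_nhds.2 hga) ?_, hfgh⟩
    have hdf := ((hg.differentiableAt (by simp)).hasFDerivAt.mul_continuousAt_of_eq_zero hga
      hh.continuousAt).congr_of_eventuallyEq hfgh
    simpa [hha] using hdf.fderiv
  · refine ⟨fun x => f x / g x, (hf.div hg hga).of_le le_self_add,
      div_ne_zero (fun hfa => hga (hfg.self_of_nhds.1 hfa)) hga, ?_⟩
    filter_upwards [hg.continuousAt.eventually_ne hga] with x hx
    rw [mul_div_cancel₀ _ hx]

section Quotient

variable {X : Type*} [TopologicalSpace X]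

-- No case split on `g x` is needed: if `g x ≠ 0`, then `x ∈ {g ≠ 0}` and the limit is
-- `f x / g x` whenever `f / g` is continuous at `x`.
noncomputable def limDiv (f g : X → ℝ) (x : X) : ℝ :=
  limUnder (𝓝[{y | g y ≠ 0}] x) fun y => f y / g y

theorem limDiv_eventuallyEq {f g h : X → ℝ} {a : X} (hfg : ∀ᶠ x in 𝓝 a, f x = g x * h x)
    (hh : ∀ᶠ x in 𝓝 a, ContinuousAt h x) (hg : ∀ᶠ x in 𝓝 a, (𝓝[{y | g y ≠ 0}] x).NeBot) :
    limDiv f g =ᶠ[𝓝 a] h := by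
  filter_upwards [hfg.eventually_nhds, hh, hg] with x hfgx hhx hgx
  have hdiv : (fun y => f y / g y) =ᶠ[𝓝[{y | g y ≠ 0}] x] h := by
    filter_upwards [nhdsWithin_le_nhds hfgx, self_mem_nhdsWithin] with y hy hgy
    rw [hy, mul_div_cancel_left₀ _ hgy]
  exact ((hhx.tendsto.mono_left nhdsWithin_le_nhds).congr' hdiv.symm).limUnder_eq

end Quotient

theorem stmt_3_general (n : ℕ) (k : ℕ) (hk : 1 ≤ k)
    (Ω : Set (EuclideanSpace ℝ (Fin n))) (hΩ : IsOpen Ω)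
    (f g : EuclideanSpace ℝ (Fin n) → ℝ)
    (hf : ContDiffOn ℝ k f Ω) (hg : ContDiffOn ℝ k g Ω)
    (hfsimple : ∀ a ∈ Ω, f a = 0 → gradient f a ≠ 0)
    (hgsimple : ∀ a ∈ Ω, g a = 0 → gradient g a ≠ 0)
    (hzero : ∀ a ∈ Ω, (f a = 0 ↔ g a = 0)) :
    ∃ φ : EuclideanSpace ℝ (Fin n) → ℝ, ContDiffOn ℝ (k - 1 : ℕ) φ Ω ∧
      (∀ x ∈ Ω, φ x ≠ 0) ∧ (∀ x ∈ Ω, f x = g x * φ x) := by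
  obtain ⟨m, rfl⟩ := Nat.exists_eq_add_of_le' hk
  rw [Nat.cast_succ] at hf hg
  have hfderiv {u : EuclideanSpace ℝ (Fin n) → ℝ} {x} (hu : gradient u x ≠ 0) :
      fderiv ℝ u x ≠ 0 := fun h0 => hu (by simp [gradient, h0])
  have hlocal : ∀ a ∈ Ω, ∃ h, ContDiffAt ℝ m h a ∧ h a ≠ 0 ∧ f a = g a * h a ∧
      limDiv f g =ᶠ[𝓝 a] h := by
    intro a ha
    have hΩa := hΩ.mem_nhds ha
    obtain ⟨h, hh, hha, hfgh⟩ := exists_contDiffAt_ne_zero_eventually_eq_mul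
      (hf.contDiffAt hΩa) (hg.contDiffAt hΩa) (fun h0 => hfderiv (hfsimple a ha h0))
      (fun h0 => hfderiv (hgsimple a ha h0)) (eventually_of_mem hΩa hzero)
    refine ⟨h, hh, hha, hfgh.self_of_nhds, limDiv_eventuallyEq hfgh
      ((hh.eventually (by simp)).mono fun _ hx => hx.continuousAt) ?_⟩
    filter_upwards [hΩa] with x hx
    exact neBot_nhdsWithin_setOf_ne_zero fun h0 => hfderiv (hgsimple x hx h0)
  refine ⟨limDiv f g, fun a ha => ?_, fun a ha => ?_, fun a ha => ?_⟩ <;>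
    obtain ⟨h, hh, hha, hfa, hφ⟩ := hlocal a ha
  · simpa using (hh.congr_of_eventuallyEq hφ).contDiffWithinAt
  · rwa [hφ.self_of_nhds]
  · rwa [hφ.self_of_nhds]

/-- C^k quotient of real functions in arbitrary dimension. -/
theorem stmt_3 (n : ℕ) (hn : 2 ≤ n) (k : ℕ) (hk : 1 ≤ k)
    (Ω : Set (EuclideanSpace ℝ (Fin n))) (hΩ : IsOpen Ω)
    (f g : EuclideanSpace ℝ (Fin n) → ℝ)
    (hf : ContDiffOn ℝ k f Ω) (hg : ContDiffOn ℝ k g Ω)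
    (hfsimple : ∀ a ∈ Ω, f a = 0 → gradient f a ≠ 0)
    (hgsimple : ∀ a ∈ Ω, g a = 0 → gradient g a ≠ 0)
    (hzero : ∀ a ∈ Ω, (f a = 0 ↔ g a = 0)) :
    ∃ φ : EuclideanSpace ℝ (Fin n) → ℝ, ContDiffOn ℝ (k - 1 : ℕ) φ Ω ∧
      (∀ x ∈ Ω, φ x ≠ 0) ∧ (∀ x ∈ Ω, f x = g x * φ x) :=
  stmt_3_general n k hk Ω hΩ f g hf hg hfsimple hgsimple hzero
end

section
/- Let Ω ⊆ ℝⁿ (n ≥ 2) be open and let f, g : Ω → ℂ be C¹ functions with simple zeros sharing a common zero set Γ. If f and g are complex linearly related, i.e., for every a ∈ Γ there exists λ(a) ∈ ℂ with Df|_a = λ(a)·Dg|_a as real linear maps ℝⁿ → ℂ, then there exists a nowhere-vanishing continuous function φ : Ω → ℂ such that f = g·φ on Ω. -/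
/-!
Take `φ = f / g` off the common zero set `Γ` and `φ = λ` on it. Near `a ∈ Γ`, fix `v` with
`Dg_a v = 1`; along `Γ` we have `λ = Df(v) / Dg(v)`, which is continuous. Off `Γ`,
`f / g - λ(a) = h / g` with `h = f - λ(a) g`, a function with vanishing strict derivative at `a`
that vanishes on `Γ`. Since `Dg_a` is onto, the Lyusternik–Graves estimate puts every `x` near `a`
within `O(‖g x‖)` of a point of `Γ`, where `h` vanishes, so `h x = o(g x)`. Finally `λ ≠ 0` because
`Df` is onto on `Γ`.
-/

open Metric Set Filter Topology Asymptotics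

theorem tendsto_of_eventually_eq_smul {α E : Type*} [NormedAddCommGroup E] [NormedSpace ℝ E]
    {l : Filter α} {A B : α → E →L[ℝ] ℂ} {c : α → ℂ} {A₀ : E →L[ℝ] ℂ} {c₀ : ℂ}
    (hA : Tendsto A l (𝓝 A₀)) (hB : Tendsto B l (𝓝 (c₀ • A₀))) (hA₀ : A₀ ≠ 0)
    (hc : ∀ᶠ x in l, B x = c x • A x) : Tendsto c l (𝓝 c₀) := by
  obtain ⟨v, hv⟩ : ∃ v, A₀ v ≠ 0 := by
    by_contra! h
    exact hA₀ (ContinuousLinearMap.ext h)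
  have happly : ∀ {T : α → E →L[ℝ] ℂ} {T₀}, Tendsto T l (𝓝 T₀) →
      Tendsto (fun x => T x v) l (𝓝 (T₀ v)) := fun hT =>
    ((ContinuousLinearMap.apply ℝ ℂ v).continuous.tendsto _).comp hT
  have hquot : Tendsto (fun x => B x v / A x v) l (𝓝 c₀) := by
    have := (happly hB).div (happly hA) hv
    rwa [smul_apply, smul_eq_mul, mul_div_cancel_right₀ _ hv] at this
  refine hquot.congr' ?_
  filter_upwards [hc, (happly hA).eventually_ne hv] with x hcx hAx
  rw [hcx, smul_apply, smul_eq_mul, mul_div_cancel_right₀ _ hAx]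

section ZeroSet

variable {E F G : Type*} [NormedAddCommGroup E] [NormedSpace ℝ E] [CompleteSpace E]
  [NormedAddCommGroup F] [NormedSpace ℝ F] [CompleteSpace F]
  [NormedAddCommGroup G] [NormedSpace ℝ G]

theorem HasStrictFDerivAt.exists_zero_dist_le_mul_norm {g : E → F} {A : E →L[ℝ] F} {a : E}
    (hg : HasStrictFDerivAt g A a) (hga : g a = 0) (hA : Function.Surjective A) :
    ∃ C > 0, ∀ s ∈ 𝓝 a, ∀ᶠ x in 𝓝 a, ∃ p ∈ s, g p = 0 ∧ dist x p ≤ C * ‖g x‖ := by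
  set A' := A.nonlinearRightInverseOfSurjective (LinearMap.range_eq_top.2 hA)
  set M := A'.nnnorm
  have hM : 0 < M := A.nonlinearRightInverseOfSurjective_nnnorm_pos _
  -- with this constant, `g` maps `closedBall x ρ` onto a ball of radius `ρ / (2 * M)` about `g x`
  obtain ⟨t, ht, happrox⟩ :=
    hg.approximates_deriv_on_nhds (c := M⁻¹ / 2) (Or.inr (half_pos (inv_pos.2 hM)))
  refine ⟨2 * (M : ℝ), by positivity, fun s hs => ?_⟩
  obtain ⟨r, hr, hrst⟩ := nhds_basis_closedBall.mem_iff.1 (inter_mem hs ht)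
  have hgx : ∀ᶠ x in 𝓝 a, 2 * (M : ℝ) * ‖g x‖ < r / 2 := by
    have : Tendsto (fun x => 2 * (M : ℝ) * ‖g x‖) (𝓝 a) (𝓝 0) := by
      simpa [hga] using (hg.continuousAt.norm.tendsto).const_mul (2 * (M : ℝ))
    exact this.eventually (eventually_lt_nhds (by positivity))
  filter_upwards [hgx, ball_mem_nhds a (half_pos hr)] with x hgx hxa
  have hball : closedBall x (2 * (M : ℝ) * ‖g x‖) ⊆ closedBall a r := by
    refine closedBall_subset_closedBall' ?_
    linarith [mem_ball.1 hxa]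
  have h0mem : (0 : F) ∈
      closedBall (g x) (((M : ℝ)⁻¹ - (M⁻¹ / 2 : NNReal)) * (2 * (M : ℝ) * ‖g x‖)) := by
    rw [mem_closedBall, dist_zero_left]
    apply le_of_eq
    push_cast
    field_simp
    ring
  obtain ⟨p, hpx, hgp⟩ := happrox.surjOn_closedBall_of_nonlinearRightInverse A' (by positivity)
    (hball.trans (hrst.trans inter_subset_right)) h0mem
  exact ⟨p, (hrst (hball hpx)).1, hgp, by rw [dist_comm]; exact mem_closedBall.1 hpx⟩

theorem HasStrictFDerivAt.isLittleO_of_eventually_eq_zero {g : E → F} {h : E → G}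
    {A : E →L[ℝ] F} {a : E} (hg : HasStrictFDerivAt g A a) (hga : g a = 0)
    (hA : Function.Surjective A) (hh : HasStrictFDerivAt h (0 : E →L[ℝ] G) a)
    (hvan : ∀ᶠ x in 𝓝 a, g x = 0 → h x = 0) : h =o[𝓝 a] g := by
  obtain ⟨C, hC0, hC⟩ := hg.exists_zero_dist_le_mul_norm hga hA
  refine isLittleO_iff.2 fun c hc => ?_
  obtain ⟨t, ht, hlip⟩ := eventually_prod_self_iff (la := 𝓝 a)
    (r := fun x y => ‖h x - h y‖ ≤ c / C * ‖x - y‖) |>.1 <| by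
      simpa only [← nhds_prod_eq, zero_apply, sub_zero] using
        isLittleO_iff.1 hh.isLittleO (div_pos hc hC0)
  filter_upwards [hC _ (inter_mem ht hvan), ht] with x ⟨p, ⟨hpt, hgh⟩, hgp, hxp⟩ hxt
  calc ‖h x‖ = ‖h x - h p‖ := by rw [hgh hgp, sub_zero]
    _ ≤ c / C * dist x p := by rw [dist_eq_norm]; exact hlip x hxt p hpt
    _ ≤ c / C * (C * ‖g x‖) := by gcongr
    _ = c * ‖g x‖ := by field_simp

theorem ContDiffAt.continuousAt_ite_div {f g c : E → ℂ} {a : E}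
    (hf : ContDiffAt ℝ 1 f a) (hg : ContDiffAt ℝ 1 g a) (hga : g a = 0)
    (hsurj : Function.Surjective (fderiv ℝ g a))
    (hzero : ∀ᶠ x in 𝓝 a, g x = 0 → f x = 0)
    (hc : ∀ᶠ x in 𝓝 a, g x = 0 → fderiv ℝ f x = c x • fderiv ℝ g x) :
    ContinuousAt (fun x => if g x = 0 then c x else f x / g x) a := by
  have hfga : fderiv ℝ f a = c a • fderiv ℝ g a := hc.self_of_nhds hga
  rw [ContinuousAt, if_pos hga]
  refine Tendsto.if ?onZeroSet ?offZeroSet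
  case onZeroSet =>
    have hA₀ : fderiv ℝ g a ≠ 0 := by
      rintro h0
      obtain ⟨v, hv⟩ := hsurj 1
      simp [h0] at hv
    have hA : Tendsto (fderiv ℝ g) (𝓝[{x | g x = 0}] a) (𝓝 (fderiv ℝ g a)) :=
      (hg.continuousAt_fderiv one_ne_zero).tendsto.mono_left nhdsWithin_le_nhds
    have hB : Tendsto (fderiv ℝ f) (𝓝[{x | g x = 0}] a) (𝓝 (c a • fderiv ℝ g a)) :=
      hfga ▸ (hf.continuousAt_fderiv one_ne_zero).tendsto.mono_left nhdsWithin_le_nhds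
    exact tendsto_of_eventually_eq_smul hA hB hA₀ (eventually_inf_principal.2 hc)
  case offZeroSet =>
    have hg' := hg.hasStrictFDerivAt one_ne_zero
    have hfg := (hf.hasStrictFDerivAt one_ne_zero).sub (hg'.const_mul (c a))
    rw [← hfga, sub_self] at hfg
    have hvan : ∀ᶠ x in 𝓝 a, g x = 0 → (f - fun y => c a * g y) x = 0 := by
      filter_upwards [hzero] with x hx hgx
      simp [hx hgx, hgx]
    have hlim : Tendsto (fun x => c a + (f x - c a * g x) / g x) (𝓝 a) (𝓝 (c a)) := by
      simpa using ((hg'.isLittleO_of_eventually_eq_zero hga hsurj hfg hvan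
        ).tendsto_div_nhds_zero).const_add (c a)
    refine (hlim.mono_left inf_le_left).congr' <|
      eventually_inf_principal.2 (.of_forall fun x (hgx : g x ≠ 0) => ?_)
    field_simp
    ring

end ZeroSet

theorem stmt_6_general (n : ℕ)
    (Ω : Set (EuclideanSpace ℝ (Fin n))) (hΩ : IsOpen Ω)
    (f g : EuclideanSpace ℝ (Fin n) → ℂ)
    (hf : ContDiffOn ℝ 1 f Ω) (hg : ContDiffOn ℝ 1 g Ω)
    (hfsimple : ∀ a ∈ Ω, f a = 0 → Function.Surjective (fderiv ℝ f a))
    (hgsimple : ∀ a ∈ Ω, g a = 0 → Function.Surjective (fderiv ℝ g a))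
    (hzero : ∀ a ∈ Ω, (f a = 0 ↔ g a = 0))
    (hlin : ∀ a ∈ Ω, f a = 0 → ∃ lam : ℂ, fderiv ℝ f a = lam • fderiv ℝ g a) :
    ∃ φ : EuclideanSpace ℝ (Fin n) → ℂ, ContinuousOn φ Ω ∧
      (∀ x ∈ Ω, φ x ≠ 0) ∧ ∀ x ∈ Ω, f x = g x * φ x := by
  choose! lam hlam using hlin
  refine ⟨fun x => if g x = 0 then lam x else f x / g x, ?_, fun x hx => ?_, fun x hx => ?_⟩
  · refine continuousOn_of_forall_continuousAt fun a ha => ?_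
    have hΩa := hΩ.mem_nhds ha
    have hga : ContDiffAt ℝ 1 g a := hg.contDiffAt hΩa
    by_cases hg0 : g a = 0
    · refine (hf.contDiffAt hΩa).continuousAt_ite_div hga hg0 (hgsimple a ha hg0) ?_ ?_
      · filter_upwards [hΩa] with x hx using (hzero x hx).2
      · filter_upwards [hΩa] with x hx hgx using hlam x hx ((hzero x hx).2 hgx)
    · refine (((hf.contDiffAt hΩa).continuousAt).div hga.continuousAt hg0).congr ?_
      filter_upwards [hga.continuousAt.eventually_ne hg0] with x hx using (if_neg hx).symm
  · dsimp only
    split_ifs with hgx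
    · have hfx := (hzero x hx).2 hgx
      intro hlam0
      obtain ⟨v, hv⟩ := hfsimple x hx hfx 1
      simp [hlam x hx hfx, hlam0] at hv
    · exact div_ne_zero (mt (hzero x hx).1 hgx) hgx
  · dsimp only
    split_ifs with hgx
    · simp [hgx, (hzero x hx).2 hgx]
    · field_simp

/-- Complex linear relation of the derivatives at the common zero set implies the
existence of a continuous nowhere-vanishing quotient. -/
theorem stmt_6 (n : ℕ) (hn : 2 ≤ n)
    (Ω : Set (EuclideanSpace ℝ (Fin n))) (hΩ : IsOpen Ω)
    (f g : EuclideanSpace ℝ (Fin n) → ℂ)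
    (hf : ContDiffOn ℝ 1 f Ω) (hg : ContDiffOn ℝ 1 g Ω)
    (hfsimple : ∀ a ∈ Ω, f a = 0 → Function.Surjective (fderiv ℝ f a))
    (hgsimple : ∀ a ∈ Ω, g a = 0 → Function.Surjective (fderiv ℝ g a))
    (hzero : ∀ a ∈ Ω, (f a = 0 ↔ g a = 0))
    (hlin : ∀ a ∈ Ω, f a = 0 → ∃ lam : ℂ, fderiv ℝ f a = lam • fderiv ℝ g a) :
    ∃ φ : EuclideanSpace ℝ (Fin n) → ℂ, ContinuousOn φ Ω ∧
      (∀ x ∈ Ω, φ x ≠ 0) ∧ ∀ x ∈ Ω, f x = g x * φ x :=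
  stmt_6_general n Ω hΩ f g hf hg hfsimple hgsimple hzero hlin
end

section
/- Let I ⊆ ℝ be an open interval containing 0, let f ∈ C^k(I) with k ≥ 1, and define g(x) = (1/x)·∫₀ˣ f'(t) dt for x ∈ I \ {0}. Then for every 0 ≤ j ≤ k−1 and every x ∈ I \ {0}, the j-th derivative of g satisfies g^{(j)}(x) = (1/x^{j+1})·∫₀ˣ tʲ f^{(j+1)}(t) dt. -/
/-!
Induction on `j`. On the open set `I \ {0}`, differentiating
`x⁻ʲ⁻¹ ∫₀ˣ tʲ D(t) dt` (with `D = f⁽ʲ⁺¹⁾`) by the product rule and the fundamental theorem of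
calculus gives `x⁻ʲ⁻² (x^(j+1) D(x) - (j+1) ∫₀ˣ tʲ D(t) dt)`, and integrating
`∫₀ˣ t^(j+1) D'(t) dt` by parts produces exactly the bracket.
-/

open intervalIntegral MeasureTheory Set

theorem integral_pow_succ_mul_deriv {D D' : ℝ → ℝ} {x : ℝ} (j : ℕ)
    (hD : ∀ t ∈ uIcc 0 x, HasDerivAt D (D' t) t) (hD' : IntervalIntegrable D' volume 0 x) :
    ∫ t in (0:ℝ)..x, t ^ (j + 1) * D' t =
      x ^ (j + 1) * D x - (j + 1) * ∫ t in (0:ℝ)..x, t ^ j * D t := by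
  have hpow : ∀ t ∈ uIcc 0 x, HasDerivAt (fun t : ℝ => t ^ (j + 1)) ((j + 1) * t ^ j) t :=
    fun t _ => by simpa using hasDerivAt_pow (j + 1) t
  rw [intervalIntegral.integral_mul_deriv_eq_deriv_mul hpow hD
    ((continuous_const.mul (continuous_pow j)).intervalIntegrable _ _) hD']
  simp [mul_assoc, intervalIntegral.integral_const_mul]

theorem hasDerivAt_one_div_pow_mul_integral {U : Set ℝ} {D D' : ℝ → ℝ} {x : ℝ} (j : ℕ)
    (hU : IsOpen U) (hxU : uIcc 0 x ⊆ U) (hx : x ≠ 0)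
    (hD : ∀ t ∈ U, HasDerivAt D (D' t) t) (hD' : IntervalIntegrable D' volume 0 x) :
    HasDerivAt (fun y => 1 / y ^ (j + 1) * ∫ t in (0:ℝ)..y, t ^ j * D t)
      (1 / x ^ (j + 2) * ∫ t in (0:ℝ)..x, t ^ (j + 1) * D' t) x := by
  have hxU' : x ∈ U := hxU right_mem_uIcc
  have hcont : ContinuousOn (fun t => t ^ j * D t) U :=
    (continuousOn_pow j).mul fun t ht => (hD t ht).continuousAt.continuousWithinAt
  have hFTC : HasDerivAt (fun y => ∫ t in (0:ℝ)..y, t ^ j * D t) (x ^ j * D x) x :=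
    integral_hasDerivAt_right ((hcont.mono hxU).intervalIntegrable)
      (hcont.stronglyMeasurableAtFilter hU x hxU') (hcont.continuousAt (hU.mem_nhds hxU'))
  have hpow : HasDerivAt (fun y : ℝ => 1 / y ^ (j + 1))
      (-((j + 1) * x ^ j) / (x ^ (j + 1)) ^ 2) x := by
    simpa using ((hasDerivAt_pow (j + 1) x).fun_inv (pow_ne_zero _ hx))
  refine (hpow.mul hFTC).congr_deriv ?_
  rw [integral_pow_succ_mul_deriv j (fun t ht => hD t (hxU ht)) hD']
  field_simp
  ring

theorem iteratedDerivWithin_succ_eq_of_eqOn {s : Set ℝ} {g F : ℝ → ℝ} {F' x : ℝ} {n : ℕ}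
    (hs : IsOpen s) (hx : x ∈ s) (hgF : EqOn (iteratedDerivWithin n g s) F s)
    (hF : HasDerivAt F F' x) :
    iteratedDerivWithin (n + 1) g s x = F' := by
  rw [iteratedDerivWithin_succ, derivWithin_of_isOpen hs hx]
  exact (hF.congr_of_eventuallyEq (hgF.eventuallyEq_of_mem (hs.mem_nhds hx))).deriv

theorem ContDiffOn.hasDerivAt_iteratedDerivWithin {I : Set ℝ} {f : ℝ → ℝ} {k n : ℕ} {t : ℝ}
    (hf : ContDiffOn ℝ k f I) (hI : IsOpen I) (hn : n + 1 ≤ k) (ht : t ∈ I) :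
    HasDerivAt (iteratedDerivWithin n f I) (iteratedDerivWithin (n + 1) f I t) t := by
  have hdiff := hf.differentiableOn_iteratedDerivWithin (m := n) (by exact_mod_cast hn)
    hI.uniqueDiffOn t ht
  rw [iteratedDerivWithin_succ, derivWithin_of_isOpen hI ht]
  exact (hdiff.differentiableAt (hI.mem_nhds ht)).hasDerivAt

theorem stmt_9_general (I : Set ℝ) (hIopen : IsOpen I) (hIinterval : I.OrdConnected)
    (h0 : (0 : ℝ) ∈ I) (k : ℕ)
    (f : ℝ → ℝ) (hf : ContDiffOn ℝ k f I)
    (g : ℝ → ℝ)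
    (hg : ∀ x ∈ I \ {0}, g x = (1 / x) * ∫ t in (0:ℝ)..x, derivWithin f I t) :
    ∀ j : ℕ, j ≤ k - 1 → ∀ x ∈ I \ {0},
      iteratedDerivWithin j g (I \ {0}) x =
        (1 / x ^ (j + 1)) * ∫ t in (0:ℝ)..x, t ^ j * iteratedDerivWithin (j + 1) f I t := by
  have hs : IsOpen (I \ {0}) := hIopen.sdiff isClosed_singleton
  intro j
  induction j with
  | zero =>
    intro _ x hx
    simp [hg x hx]
  | succ j ih =>
    intro hj x ⟨hxI, hx0⟩
    have hsub : uIcc 0 x ⊆ I := hIinterval.uIcc_subset h0 hxI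
    refine iteratedDerivWithin_succ_eq_of_eqOn hs ⟨hxI, hx0⟩ (ih (by omega))
      (hasDerivAt_one_div_pow_mul_integral j hIopen hsub hx0
        (fun t ht => hf.hasDerivAt_iteratedDerivWithin hIopen (by omega) ht) ?_)
    have hD' := hf.continuousOn_iteratedDerivWithin (m := j + 2)
      (by exact_mod_cast (by omega : j + 2 ≤ k)) hIopen.uniqueDiffOn
    exact (hD'.mono hsub).intervalIntegrable

/-- Integral formula for the derivatives of the difference quotient
`g x = (1/x) ∫₀ˣ f'(t) dt`. -/
theorem stmt_9 (I : Set ℝ) (hIopen : IsOpen I) (hIinterval : I.OrdConnected)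
    (h0 : (0 : ℝ) ∈ I) (k : ℕ) (hk : 1 ≤ k)
    (f : ℝ → ℝ) (hf : ContDiffOn ℝ k f I)
    (g : ℝ → ℝ)
    (hg : ∀ x ∈ I \ {0}, g x = (1 / x) * ∫ t in (0:ℝ)..x, derivWithin f I t) :
    ∀ j : ℕ, j ≤ k - 1 → ∀ x ∈ I \ {0},
      iteratedDerivWithin j g (I \ {0}) x =
        (1 / x ^ (j + 1)) * ∫ t in (0:ℝ)..x, t ^ j * iteratedDerivWithin (j + 1) f I t :=
  stmt_9_general I hIopen hIinterval h0 k f hf g hg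
end

section
/- Define f, g : ℝ² → ℂ by f(x,y) = x + x² + i·x + i·y and g(x,y) = x + i·x + i·y. Then the quotient f/g, defined on ℝ² \ {(0,0)}, extends to a continuous function φ : ℝ² → ℂ with φ(0,0) = 1, but this extension φ is not differentiable at the origin. -/
/-!
Off the origin `f / g = 1 + x² / g`, and `|x| = |Re g| ≤ |g|`, so `|f / g - 1| ≤ |x|` and the
quotient extends continuously by `1`. Since `g` is `ℝ`-linear, along every line through the origin
the extension is affine: `φ (t • v) = 1 + t • (v₁² / g v)`. Hence its directional derivative in the
direction `v` is `v₁² / g v`, which is not additive in `v`: it equals `1 / (1 + i)` for `(1, 0)`,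
`0` for `(0, -1)` and `1` for `(1, -1)`.
-/

open Complex Filter Topology

section LineDeriv

variable {𝕜 E F : Type*} [NontriviallyNormedField 𝕜] [NormedAddCommGroup E] [NormedSpace 𝕜 E]
  [NormedAddCommGroup F] [NormedSpace 𝕜 F]

theorem not_differentiableAt_of_hasLineDerivAt_add_ne {f : E → F} {x v w : E} {a b c : F}
    (hv : HasLineDerivAt 𝕜 f a x v) (hw : HasLineDerivAt 𝕜 f b x w)
    (hvw : HasLineDerivAt 𝕜 f c x (v + w)) (h : c ≠ a + b) : ¬ DifferentiableAt 𝕜 f x := by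
  intro hf
  have hL := hf.hasFDerivAt
  apply h
  rw [← (hL.hasLineDerivAt _).unique hvw, ← (hL.hasLineDerivAt _).unique hv,
    ← (hL.hasLineDerivAt _).unique hw, map_add]

end LineDeriv

namespace Counterexample

noncomputable def g₀ : ℝ × ℝ →L[ℝ] ℂ :=
  (ContinuousLinearMap.fst ℝ ℝ ℝ).smulRight (1 + I) + (ContinuousLinearMap.snd ℝ ℝ ℝ).smulRight I

theorem g₀_apply (p : ℝ × ℝ) : g₀ p = p.1 + I * p.1 + I * p.2 := by
  simp only [g₀, add_apply, ContinuousLinearMap.smulRight_apply, ContinuousLinearMap.coe_fst',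
    ContinuousLinearMap.coe_snd', smul_add, real_smul, mul_one]
  ring

theorem re_g₀ (p : ℝ × ℝ) : (g₀ p).re = p.1 := by
  simp [g₀_apply]

theorem g₀_ne_zero {p : ℝ × ℝ} (hp : p ≠ 0) : g₀ p ≠ 0 := by
  intro h
  have h1 : p.1 = 0 := by simpa [re_g₀] using congrArg re h
  have h2 : p.2 = 0 := by simpa [g₀_apply, h1] using congrArg im h
  exact hp (Prod.ext h1 h2)

theorem abs_fst_le_norm_g₀ (p : ℝ × ℝ) : |p.1| ≤ ‖g₀ p‖ :=
  re_g₀ p ▸ abs_re_le_norm (g₀ p)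

/-- At the origin the junk value `x² / 0 = 0` makes this `1`. -/
noncomputable def φ₀ (p : ℝ × ℝ) : ℂ := 1 + (p.1 : ℂ) ^ 2 / g₀ p

theorem norm_φ₀_sub_one_le (p : ℝ × ℝ) : ‖φ₀ p - 1‖ ≤ |p.1| := by
  rcases eq_or_ne p.1 0 with h | h
  · simp [φ₀, h]
  have hpos : 0 < |p.1| := abs_pos.mpr h
  calc ‖φ₀ p - 1‖ = |p.1| ^ 2 / ‖g₀ p‖ := by simp [φ₀, norm_pow]
    _ ≤ |p.1| ^ 2 / |p.1| := by gcongr; exact abs_fst_le_norm_g₀ p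
    _ = |p.1| := by field_simp

theorem continuousAt_φ₀_zero : ContinuousAt φ₀ 0 := by
  have hlim : Tendsto (fun p : ℝ × ℝ => φ₀ p - 1) (𝓝 0) (𝓝 0) := by
    refine squeeze_zero_norm norm_φ₀_sub_one_le ?_
    simpa using (continuous_fst.abs.tendsto (0 : ℝ × ℝ))
  have hφ₀ : φ₀ 0 = 1 := by simp [φ₀]
  simpa [ContinuousAt, hφ₀] using hlim.add_const 1

theorem continuous_φ₀ : Continuous φ₀ := by
  refine continuous_iff_continuousAt.2 fun p => ?_
  rcases eq_or_ne p 0 with rfl | hp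
  · exact continuousAt_φ₀_zero
  · exact continuousAt_const.add
      (((continuous_ofReal.comp continuous_fst).pow 2).continuousAt.div
        g₀.continuous.continuousAt (g₀_ne_zero hp))

theorem φ₀_smul (t : ℝ) (v : ℝ × ℝ) : φ₀ (t • v) = 1 + t • ((v.1 : ℂ) ^ 2 / g₀ v) := by
  rcases eq_or_ne t 0 with rfl | ht
  · simp [φ₀]
  have ht' : (t : ℂ) ≠ 0 := ofReal_ne_zero.mpr ht
  simp only [φ₀, map_smul, Prod.smul_fst, smul_eq_mul, ofReal_mul, Complex.real_smul]
  rw [mul_pow, sq (t : ℂ), mul_assoc, mul_div_mul_left _ _ ht', mul_div_assoc]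

theorem hasLineDerivAt_φ₀ (v : ℝ × ℝ) : HasLineDerivAt ℝ φ₀ ((v.1 : ℂ) ^ 2 / g₀ v) 0 v := by
  simp only [HasLineDerivAt, zero_add, φ₀_smul]
  simpa using ((hasDerivAt_id (0 : ℝ)).smul_const ((v.1 : ℂ) ^ 2 / g₀ v)).const_add 1

theorem not_differentiableAt_φ₀ : ¬ DifferentiableAt ℝ φ₀ 0 := by
  refine not_differentiableAt_of_hasLineDerivAt_add_ne (hasLineDerivAt_φ₀ (1, 0))
    (hasLineDerivAt_φ₀ (0, -1)) (hasLineDerivAt_φ₀ _) ?_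
  simp only [Prod.mk_add_mk, g₀_apply]
  norm_num

end Counterexample

open Counterexample in
/-- The quotient of `f(x,y) = x + x² + i·x + i·y` by `g(x,y) = x + i·x + i·y` extends
to a continuous function on ℝ² with value 1 at the origin, but the extension is not
(real Fréchet) differentiable at the origin. -/
theorem stmt_17 (f g : ℝ × ℝ → ℂ)
    (hf : ∀ x y : ℝ, f (x, y) =
      (x : ℂ) + (x : ℂ) ^ 2 + Complex.I * (x : ℂ) + Complex.I * (y : ℂ))
    (hg : ∀ x y : ℝ, g (x, y) = (x : ℂ) + Complex.I * (x : ℂ) + Complex.I * (y : ℂ)) :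
    ∃ φ : ℝ × ℝ → ℂ, Continuous φ ∧ φ (0, 0) = 1 ∧
      (∀ p : ℝ × ℝ, p ≠ (0, 0) → φ p = f p / g p) ∧
      ¬ DifferentiableAt ℝ φ (0, 0) := by
  refine ⟨φ₀, continuous_φ₀, by simp [φ₀], fun ⟨x, y⟩ hp => ?_, not_differentiableAt_φ₀⟩
  have hg₀ : g (x, y) = g₀ (x, y) := by rw [hg, g₀_apply]
  have hne : g₀ (x, y) ≠ 0 := g₀_ne_zero hp
  rw [φ₀, hf, hg₀, one_add_div hne, g₀_apply]
  ring
end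

section
/- There exists a function φ : ℝ³ → ℝ with the following properties: φ vanishes on the z-axis {(0,0,z) | z ∈ ℝ}; for every C¹ path γ : (−ε, ε) → ℝ³ with γ(0) = (0,0,0) whose velocity γ'(0) is transversal to the z-axis (i.e., the first two components of γ'(0) are not both zero), the limit of φ(γ(t)) as t → 0 equals 0; yet φ is not continuous at the origin. -/
/-!
Take the indicator of the surface `x² + y² = exp (-1 / z²)`, `z ≠ 0`. Curves lying on the surface
reach the origin, so the indicator is discontinuous there. But the surface is flat along the
`z`-axis: there the squared distance to the axis is `o(z²)`, whereas along a C¹ curve through the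
origin transversal to the axis it is `≍ t²` while `z = O(t)`, so for small `t ≠ 0` the curve is off
the surface.
-/

open Filter Topology Asymptotics Set

theorem expNegInvGlue_isLittleO_id : expNegInvGlue =o[𝓝 0] id := by
  rw [isLittleO_iff_tendsto fun x hx => by simp [show x = 0 from hx]]
  simpa [div_eq_inv_mul] using expNegInvGlue.tendsto_polynomial_inv_mul_zero Polynomial.X

theorem HasDerivAt.isBigO_sub_rev {F : Type*} [NormedAddCommGroup F] [NormedSpace ℝ F]
    {f : ℝ → F} {v : F} {x : ℝ} (hf : HasDerivAt f v x) (hv : v ≠ 0) :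
    (· - x) =O[𝓝 x] (f · - f x) :=
  (HasDerivAtFilter.isTheta_sub hf hv).isBigO_symm.comp_tendsto
    (tendsto_id.prodMk tendsto_const_pure)

theorem Prod.norm_sq_le (x y : ℝ) : ‖(x, y)‖ ^ 2 ≤ x ^ 2 + y ^ 2 := by
  rw [Prod.norm_def, Real.norm_eq_abs, Real.norm_eq_abs]
  rcases max_cases |x| |y| with ⟨h, _⟩ | ⟨h, _⟩ <;> rw [h, sq_abs] <;>
    nlinarith [sq_nonneg x, sq_nonneg y]

theorem not_continuousAt_indicator_one {X M : Type*} [TopologicalSpace X] [Zero M] [One M]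
    [NeZero (1 : M)] [TopologicalSpace M] [T2Space M] {s : Set X} {x : X}
    (hx : x ∈ closure s) (hxs : x ∉ s) : ¬ ContinuousAt (s.indicator 1 : X → M) x := by
  intro h
  have := mem_closure_iff_nhdsWithin_neBot.1 hx
  have h_one : Tendsto (s.indicator 1 : X → M) (𝓝[s] x) (𝓝 1) :=
    tendsto_const_nhds.congr' <| eventually_nhdsWithin_of_forall fun y hy =>
      (indicator_of_mem hy _).symm
  have h_zero : Tendsto (s.indicator 1 : X → M) (𝓝[s] x) (𝓝 0) := by
    simpa [indicator_of_notMem hxs] using h.tendsto.mono_left nhdsWithin_le_nhds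
  exact zero_ne_one (tendsto_nhds_unique h_zero h_one)

-- `expNegInvGlue (z ^ 2) = exp (-1 / z ^ 2)` for `z ≠ 0`.
def flatSurface : Set (ℝ × ℝ × ℝ) :=
  {p | p.2.2 ≠ 0 ∧ p.1 ^ 2 + p.2.1 ^ 2 = expNegInvGlue (p.2.2 ^ 2)}

theorem zAxis_notMem_flatSurface (z : ℝ) : ((0, 0, z) : ℝ × ℝ × ℝ) ∉ flatSurface := by
  rintro ⟨hz, h⟩
  have : 0 < expNegInvGlue (z ^ 2) := expNegInvGlue.pos_of_pos (by positivity)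
  simp_all

theorem zero_mem_closure_flatSurface : ((0, 0, 0) : ℝ × ℝ × ℝ) ∈ closure flatSurface := by
  set c : ℝ → ℝ × ℝ × ℝ := fun t => (√(expNegInvGlue (t ^ 2)), 0, t)
  have hc : Continuous c := by
    have := (expNegInvGlue.contDiff (n := 0)).continuous
    fun_prop
  refine mem_closure_of_tendsto (b := 𝓝[≠] (0 : ℝ)) (f := c) ?_ ?_
  · simpa [c] using (hc.tendsto 0).mono_left nhdsWithin_le_nhds
  · filter_upwards [self_mem_nhdsWithin] with t ht
    exact ⟨ht, by simp [c, Real.sq_sqrt (expNegInvGlue.nonneg _)]⟩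

theorem eventually_notMem_flatSurface {γ : ℝ → ℝ × ℝ × ℝ} {v : ℝ × ℝ × ℝ}
    (hγ : HasDerivAt γ v 0) (hγ0 : γ 0 = (0, 0, 0)) (hv : (v.1, v.2.1) ≠ 0) :
    ∀ᶠ t in 𝓝[≠] 0, γ t ∉ flatSurface := by
  set p : ℝ → ℝ × ℝ := fun t => ((γ t).1, (γ t).2.1)
  set z : ℝ → ℝ := fun t => (γ t).2.2
  have hp0 : p 0 = 0 := by simp [p, hγ0]
  have hz0 : z 0 = 0 := by simp [z, hγ0]
  have hp : HasDerivAt p (v.1, v.2.1) 0 := hγ.fst.prodMk hγ.snd.fst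
  have hz : HasDerivAt z v.2.2 0 := hγ.snd.snd
  have hid_p : (fun t : ℝ => t) =O[𝓝 0] p := by
    simpa [hp0] using hp.isBigO_sub_rev hv
  have hz_id : z =O[𝓝 0] fun t => t := by
    simpa [hz0] using hz.isBigO_sub
  have hz_sq : Tendsto (fun t => z t ^ 2) (𝓝 0) (𝓝 0) := by
    simpa [hz0] using hz.continuousAt.tendsto.pow 2
  have hflat : (fun t => expNegInvGlue (z t ^ 2)) =o[𝓝 0] fun t => ‖p t‖ ^ 2 :=
    (expNegInvGlue_isLittleO_id.comp_tendsto hz_sq).trans_isBigO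
      ((hz_id.trans hid_p).norm_right.pow 2)
  have hp_ne : ∀ᶠ t in 𝓝[≠] 0, p t ≠ 0 := by
    filter_upwards [nhdsWithin_le_nhds hid_p.eq_zero_imp, self_mem_nhdsWithin] with t ht ht0
    exact fun h => ht0 (ht h)
  filter_upwards [nhdsWithin_le_nhds (hflat.def one_half_pos), hp_ne] with t hsmall hne hmem
  -- On the surface `‖p t‖² ≤ x² + y² = expNegInvGlue (z²) ≤ ‖p t‖² / 2`.
  have hpos : 0 < ‖p t‖ ^ 2 := by positivity
  have := Prod.norm_sq_le (γ t).1 (γ t).2.1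
  simp only [Real.norm_eq_abs, abs_pow, sq_abs, abs_of_nonneg (expNegInvGlue.nonneg _)] at hsmall
  linarith [hmem.2]

/-- There is a function on ℝ³ vanishing on the z-axis whose limit along every C¹ path
through the origin transversal to the z-axis is 0, yet which is discontinuous at the
origin. -/
theorem stmt_18 :
    ∃ φ : ℝ × ℝ × ℝ → ℝ,
      (∀ z : ℝ, φ (0, 0, z) = 0) ∧
      (∀ ε : ℝ, 0 < ε → ∀ γ : ℝ → ℝ × ℝ × ℝ,
        ContDiffOn ℝ 1 γ (Set.Ioo (-ε) ε) →
        γ 0 = (0, 0, 0) →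
        ((deriv γ 0).1 ≠ 0 ∨ (deriv γ 0).2.1 ≠ 0) →
        Filter.Tendsto (fun t => φ (γ t)) (nhdsWithin 0 (Set.Ioo (-ε) ε \ {0}))
          (nhds 0)) ∧
      ¬ ContinuousAt φ (0, 0, 0) := by
  refine ⟨flatSurface.indicator 1, fun z => indicator_of_notMem (zAxis_notMem_flatSurface z) _,
    ?_, not_continuousAt_indicator_one zero_mem_closure_flatSurface (zAxis_notMem_flatSurface 0)⟩
  intro ε hε γ hγ hγ0 hv
  have hγ' : HasDerivAt γ (deriv γ 0) 0 :=
    ((hγ.differentiableOn one_ne_zero).differentiableAt (Ioo_mem_nhds (by linarith) hε)).hasDerivAt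
  have h_off := eventually_notMem_flatSurface hγ' hγ0 (by rwa [Ne, Prod.mk_eq_zero, not_and_or])
  refine tendsto_const_nhds.congr' ?_
  filter_upwards [nhdsWithin_mono _ (fun t ht => ht.2) h_off] with t ht
  exact (indicator_of_notMem ht _).symm
end
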